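/- The number of words w over the alphabet {a, b, c} of length 3n with |w|_a + |w|_b = 2|w|_c, such that every prefix w' satisfies |w'|_a + |w'|_b ≤ 2|w'|_c, equals (4^n/(2n+1)) * C(3n, n). -/

import Mathlib

inductive Step | a | b | c
deriving DecidableEq

def IsExcursion (n : ℕ) (w : List Step) : Prop :=
  w.length = 3 * n ∧ w.count Step.a + w.count Step.b = 2 * w.count Step.c ∧
    ∀ p : List Step, p <+: w → p.count Step.a + p.count Step.b ≤ 2 * p.count Step.c

instance : Fintype Step := ⟨{Step.a, Step.b, Step.c}, fun x => by cases x <;> simp⟩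

namespace Cyc

def val : Step → ℤ
  | .a => -1
  | .b => -1
  | .c => 2

def sg (w : List Step) : ℤ := (w.map val).sum

lemma sg_nil : sg [] = 0 := rfl

lemma sg_append (u v : List Step) : sg (u ++ v) = sg u + sg v := by
  simp [sg]

lemma sg_eq_counts (w : List Step) :
    sg w = 2 * (w.count Step.c : ℤ) - w.count Step.a - w.count Step.b := by
  induction w with
  | nil => simp [sg]
  | cons x t ih =>
    have : sg (x :: t) = val x + sg t := by simp [sg]
    rw [this, ih]
    cases x <;> simp [val, List.count_cons] <;> push_cast <;> ring

lemma counts_le_iff (p : List Step) :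
    (p.count Step.a + p.count Step.b ≤ 2 * p.count Step.c) ↔ 0 ≤ sg p := by
  rw [sg_eq_counts]; omega

lemma counts_eq_iff (p : List Step) :
    (p.count Step.a + p.count Step.b = 2 * p.count Step.c) ↔ sg p = 0 := by
  rw [sg_eq_counts]; omega

lemma count_sum (w : List Step) :
    w.count Step.a + w.count Step.b + w.count Step.c = w.length := by
  induction w with
  | nil => simp
  | cons x t ih => cases x <;> simp [List.count_cons] <;> omega

/-- `Good w` : every proper prefix has nonnegative sum. -/
def Good (w : List Step) : Prop := ∀ j < w.length, 0 ≤ sg (w.take j)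

lemma sg_rotate_take (w : List Step) (r j : ℕ) (hr : r ≤ w.length) (hj : j ≤ w.length) :
    sg ((w.rotate r).take j)
      = sg (w.take (r + j)) - sg (w.take r) + sg (w.take (j - (w.length - r))) := by
  rw [List.rotate_eq_drop_append_take hr, List.take_append]
  rw [sg_append, List.length_drop]
  have h1 : sg (w.take (r + j)) = sg (w.take r) + sg ((w.drop r).take j) := by
    rw [← sg_append, ← List.take_add]
  have h2 : (w.take r).take (j - (w.length - r)) = w.take (j - (w.length - r)) := by
    rw [List.take_take, min_eq_left (by omega)]
  rw [h2]; omega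

lemma good_rotate_iff (w : List Step) (hσ : sg w = -1) (r : ℕ) (hr : r < w.length) :
    Good (w.rotate r) ↔
      ((∀ k, r ≤ k → k < w.length → sg (w.take r) ≤ sg (w.take k)) ∧
        (∀ t, t < r → sg (w.take r) < sg (w.take t))) := by
  have hlen : (w.rotate r).length = w.length := List.length_rotate w r
  have hz : sg [] = 0 := rfl
  constructor
  · intro hg
    constructor
    · intro k hrk hkN
      have hj := hg (k - r) (by omega)
      rw [sg_rotate_take w r (k - r) (by omega) (by omega)] at hj
      have e1 : r + (k - r) = k := by omega
      have e2 : k - r - (w.length - r) = 0 := by omega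
      rw [e1, e2, List.take_zero, hz] at hj
      linarith
    · intro t ht
      have hj := hg (t + w.length - r) (by omega)
      rw [sg_rotate_take w r (t + w.length - r) (by omega) (by omega)] at hj
      have e1 : r + (t + w.length - r) = w.length + t := by omega
      have e2 : t + w.length - r - (w.length - r) = t := by omega
      rw [e1, e2] at hj
      have e3 : w.take (w.length + t) = w := List.take_of_length_le (by omega)
      rw [e3, hσ] at hj
      linarith
  · rintro ⟨h1, h2⟩ j hj
    rw [hlen] at hj
    rw [sg_rotate_take w r j (by omega) (by omega)]
    by_cases hc : r + j < w.length
    · have e2 : j - (w.length - r) = 0 := by omega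
      rw [e2, List.take_zero, hz]
      have := h1 (r + j) (by omega) hc
      linarith
    · have e1 : w.take (r + j) = w := List.take_of_length_le (by omega)
      rw [e1, hσ]
      rcases Nat.eq_zero_or_pos r with hr0 | hrpos
      · omega
      have ht : j - (w.length - r) < r := by omega
      have := h2 (j - (w.length - r)) ht
      linarith

/-- The cycle lemma: a word with sum -1 has exactly one rotation that is Good. -/
lemma cycle_lemma (w : List Step) (hσ : sg w = -1) (hpos : 0 < w.length) :
    ∃! r, r < w.length ∧ Good (w.rotate r) := by
  classical
  set N := w.length with hN
  have hne : ((Finset.range N).image (fun k => sg (w.take k))).Nonempty :=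
    ⟨sg (w.take 0), Finset.mem_image.2 ⟨0, Finset.mem_range.2 hpos, rfl⟩⟩
  set M := ((Finset.range N).image (fun k => sg (w.take k))).min' hne with hM
  have hex : ∃ r, r < N ∧ sg (w.take r) = M := by
    obtain ⟨k, hk, hSk⟩ := Finset.mem_image.1 (((Finset.range N).image (fun k => sg (w.take k))).min'_mem hne)
    exact ⟨k, Finset.mem_range.1 hk, hSk⟩
  have hmin : ∀ t, t < N → M ≤ sg (w.take t) := fun t ht =>
    Finset.min'_le _ _ (Finset.mem_image.2 ⟨t, Finset.mem_range.2 ht, rfl⟩)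
  obtain ⟨hrN, hrM⟩ := Nat.find_spec hex
  refine ⟨Nat.find hex, ⟨hrN, ?_⟩, ?_⟩
  · rw [good_rotate_iff w hσ _ hrN]
    constructor
    · intro k hrk hkN; rw [hrM]; exact hmin k hkN
    · intro t ht
      have htN : t < N := lt_trans ht hrN
      have hne' : sg (w.take t) ≠ M := fun h => Nat.find_min hex ht ⟨htN, h⟩
      have := hmin t htN
      rw [hrM]
      omega
  · rintro r' ⟨hr'N, hg'⟩
    rw [good_rotate_iff w hσ r' hr'N] at hg'
    obtain ⟨h1, h2⟩ := hg'
    have hSr' : sg (w.take r') = M := by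
      have hle : ∀ t, t < N → sg (w.take r') ≤ sg (w.take t) := by
        intro t ht
        rcases lt_or_ge t r' with h | h
        · exact le_of_lt (h2 t h)
        · exact h1 t h ht
      have h1' : M ≤ sg (w.take r') := hmin r' hr'N
      have h2' : sg (w.take r') ≤ M := by
        obtain ⟨k, hk, hSk⟩ := hex
        rw [← hSk]; exact hle k hk
      omega
    have hle : Nat.find hex ≤ r' := Nat.find_min' hex ⟨hr'N, hSr'⟩
    rcases Nat.eq_or_lt_of_le hle with h | h
    · omega
    · exfalso
      have := h2 _ h
      rw [hSr', hrM] at this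
      omega
lemma card_fun (N n : ℕ) :
    (Finset.univ.filter
        (fun f : Fin N → Step => (Finset.univ.filter (fun i => f i = Step.c)).card = n)).card
      = Nat.choose N n * 2 ^ (N - n) := by
  classical
  rw [Finset.card_eq_sum_card_fiberwise
      (f := fun f : Fin N → Step => Finset.univ.filter (fun i => f i = Step.c))
      (t := Finset.powersetCard n Finset.univ)
      (fun f hf => Finset.mem_powersetCard_univ.2 (Finset.mem_filter.1 hf).2)]
  have hfib : ∀ S ∈ Finset.powersetCard n Finset.univ,
      ((Finset.univ.filter
          (fun f : Fin N → Step => (Finset.univ.filter (fun i => f i = Step.c)).card = n)).filter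
        (fun f => Finset.univ.filter (fun i => f i = Step.c) = S)).card = 2 ^ (N - n) := by
    intro S hS
    have hScard : S.card = n := Finset.mem_powersetCard_univ.1 hS
    have e1 : (Finset.univ.filter
          (fun f : Fin N → Step => (Finset.univ.filter (fun i => f i = Step.c)).card = n)).filter
        (fun f => Finset.univ.filter (fun i => f i = Step.c) = S)
        = Fintype.piFinset (fun i => if i ∈ S then ({Step.c} : Finset Step) else {Step.a, Step.b}) := by
      ext f
      simp only [Finset.mem_filter, Finset.mem_univ, true_and, Fintype.mem_piFinset]
      constructor
      · rintro ⟨-, hfS⟩ i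
        by_cases hi : i ∈ S
        · simp only [hi, if_true, Finset.mem_singleton]
          have : i ∈ Finset.univ.filter (fun i => f i = Step.c) := hfS ▸ hi
          simpa using this
        · simp only [hi, if_false, Finset.mem_insert, Finset.mem_singleton]
          have : i ∉ Finset.univ.filter (fun i => f i = Step.c) := fun h => hi (hfS ▸ h)
          simp only [Finset.mem_filter, Finset.mem_univ, true_and] at this
          cases h : f i <;> simp_all
      · intro h
        have hfS : Finset.univ.filter (fun i => f i = Step.c) = S := by
          ext i
          simp only [Finset.mem_filter, Finset.mem_univ, true_and]
          constructor
          · intro hfc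
            by_contra hi
            have := h i
            simp only [hi, if_false, Finset.mem_insert, Finset.mem_singleton, hfc] at this
            rcases this with h' | h' <;> exact Step.noConfusion h'
          · intro hi
            have := h i
            simpa [hi] using this
        exact ⟨hfS ▸ hScard, hfS⟩
    rw [e1, Fintype.card_piFinset]
    have e2 : ∀ i : Fin N,
        ((if i ∈ S then ({Step.c} : Finset Step) else {Step.a, Step.b})).card
          = if i ∈ S then 1 else 2 := by
      intro i; by_cases hi : i ∈ S <;> simp [hi]
    simp only [e2]
    rw [Finset.prod_ite]
    simp only [Finset.prod_const_one, Finset.prod_const, one_mul]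
    congr 1
    have : Finset.univ.filter (fun i : Fin N => ¬ i ∈ S) = Sᶜ := by
      ext i; simp
    rw [this, Finset.card_compl, hScard]
    simp
  rw [Finset.sum_congr rfl hfib, Finset.sum_const, Finset.card_powersetCard,
    Finset.card_univ, Fintype.card_fin, smul_eq_mul]

lemma count_ofFn {N : ℕ} (f : Fin N → Step) (x : Step) :
    (List.ofFn f).count x = (Finset.univ.filter (fun i => f i = x)).card := by
  rw [Finset.card_filter]
  induction N with
  | zero => simp
  | succ m ih =>
    rw [List.ofFn_succ, Fin.sum_univ_succ, ← ih (fun i => f i.succ)]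
    rw [List.count_cons]
    by_cases h : f 0 = x
    · simp [h]; omega
    · simp only [h, if_false]
      have : ¬ (x == f 0) = true := by
        simp only [beq_iff_eq]
        exact fun hx => h hx.symm
      simp [this, h]

lemma card_listset (N n : ℕ) :
    Nat.card {w : List Step // w.length = N ∧ w.count Step.c = n}
      = Nat.choose N n * 2 ^ (N - n) := by
  classical
  have hbij : Function.Bijective
      (fun f : {f : Fin N → Step // (Finset.univ.filter (fun i => f i = Step.c)).card = n} =>
        (⟨List.ofFn f.1, by simp, by rw [count_ofFn]; exact f.2⟩ :
          {w : List Step // w.length = N ∧ w.count Step.c = n})) := by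
    constructor
    · rintro ⟨f, hf⟩ ⟨g, hg⟩ h
      simp only [Subtype.mk.injEq] at h
      exact Subtype.ext (List.ofFn_injective h)
    · rintro ⟨w, hlen, hcnt⟩
      refine ⟨⟨fun i => w.get (Fin.cast hlen.symm i), ?_⟩, ?_⟩
      · have hofn : List.ofFn (fun i : Fin N => w.get (Fin.cast hlen.symm i)) = w := by
          apply List.ext_get (by simp [hlen])
          intro i h1 h2
          simp [List.get_ofFn]
        rw [← count_ofFn, hofn]; exact hcnt
      · apply Subtype.ext
        apply List.ext_get (by simp [hlen])
        intro i h1 h2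
        simp [List.get_ofFn]
  rw [← Nat.card_eq_of_bijective _ hbij, Nat.card_eq_fintype_card, Fintype.card_subtype]
  exact card_fun N n


def ESet (n : ℕ) : Set (List Step) := {w | IsExcursion n w}
def GSet (n : ℕ) : Set (List Step) :=
  {w | w.length = 3 * n + 1 ∧ w.count Step.c = n ∧ Good w}
def DSet (n : ℕ) : Set (List Step) := {w | w.length = 3 * n + 1 ∧ w.count Step.c = n}

lemma sg_of_mem_DSet {n : ℕ} {w : List Step} (h1 : w.length = 3 * n + 1)
    (h2 : w.count Step.c = n) : sg w = -1 := by
  have hs := count_sum w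
  rw [sg_eq_counts, h2]
  rw [h1, h2] at hs
  have : w.count Step.a + w.count Step.b = 2 * n + 1 := by omega
  push_cast [this]
  omega

lemma count_c_of_excursion {n : ℕ} {e : List Step} (he : IsExcursion n e) :
    e.count Step.c = n := by
  obtain ⟨h1, h2, -⟩ := he
  have := count_sum e
  omega

lemma card_GSet (n : ℕ) : Nat.card (GSet n) = Nat.card (ESet n) * 2 := by
  classical
  have hbij : Function.Bijective
      (fun p : ESet n × Bool =>
        (⟨p.1.1 ++ [if p.2 then Step.a else Step.b], by
          obtain ⟨⟨e, he⟩, b⟩ := p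
          obtain ⟨h1, h2, h3⟩ := he
          dsimp only
          have hc : e.count Step.c = n := count_c_of_excursion ⟨h1, h2, h3⟩
          refine ⟨by simp [h1], ?_, ?_⟩
          · simp only [List.count_append, hc]
            cases b <;> simp
          · intro j hj
            have hlen : (e ++ [if b then Step.a else Step.b]).length = 3 * n + 1 := by simp [h1]
            rw [hlen] at hj
            have hjle : j ≤ e.length := by omega
            have htake : (e ++ [if b then Step.a else Step.b]).take j = e.take j := by
              rw [List.take_append]
              rw [show j - e.length = 0 by omega]
              simp
            rw [htake]
            rw [← counts_le_iff]
            exact h3 _ (List.take_prefix j e)⟩ : GSet n)) := by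
    constructor
    · rintro ⟨⟨e, he⟩, b⟩ ⟨⟨e', he'⟩, b'⟩ h
      simp only [Subtype.mk.injEq] at h
      have hlen : e.length = e'.length := by
        rw [he.1, he'.1]
      obtain ⟨h1, h2⟩ := List.append_inj h hlen
      have hb : b = b' := by
        cases b <;> cases b' <;> simp_all
      simp [Prod.ext_iff, Subtype.ext_iff, h1, hb]
    · rintro ⟨w, hw1, hw2, hw3⟩
      have hσ : sg w = -1 := sg_of_mem_DSet hw1 hw2
      have hne : w ≠ [] := by
        intro h; rw [h] at hw1; simp at hw1
      have hdec : w.dropLast ++ [w.getLast hne] = w := List.dropLast_append_getLast hne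
      set e := w.dropLast with hedef
      set x := w.getLast hne with hxdef
      have hel : e.length = 3 * n := by
        rw [hedef, List.length_dropLast, hw1]
        omega
      have hetake : e = w.take (3 * n) := by
        rw [hedef, List.dropLast_eq_take, hw1]
        norm_num
      have hsge : 0 ≤ sg e := by
        rw [hetake]
        exact hw3 (3 * n) (by omega)
      have hsum : sg e + val x = -1 := by
        have := sg_append e [x]
        rw [hdec] at this
        rw [hσ] at this
        have hx : sg [x] = val x := by simp [sg]
        omega
      have hxab : (x = Step.a ∨ x = Step.b) ∧ sg e = 0 := by
        cases hx : x <;> simp [hx, val] at hsum ⊢ <;> omega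
      obtain ⟨hxor, hsge0⟩ := hxab
      have hexc : IsExcursion n e := by
        refine ⟨hel, (counts_eq_iff e).2 hsge0, ?_⟩
        intro p hp
        rw [counts_le_iff]
        have hpw : p <+: w := hp.trans ⟨[x], hdec⟩
        have hptake : p = w.take p.length := List.prefix_iff_eq_take.1 hpw
        have hplen : p.length ≤ 3 * n := by
          have := hp.length_le
          omega
        rw [hptake]
        exact hw3 p.length (by omega)
      refine ⟨⟨⟨e, hexc⟩, x = Step.a⟩, ?_⟩
      apply Subtype.ext
      simp only
      have hif : (if decide (x = Step.a) = true then Step.a else Step.b) = x := by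
        rcases hxor with h | h <;> simp [h]
      rw [hif]
      exact hdec
  rw [← Nat.card_eq_of_bijective _ hbij, Nat.card_prod]
  simp [Nat.card_eq_fintype_card]


lemma sg_perm {u v : List Step} (h : u.Perm v) : sg u = sg v :=
  (h.map val).sum_eq

lemma card_DSet_eq (n : ℕ) :
    Nat.card (DSet n) = (3 * n + 1) * Nat.card (GSet n) := by
  classical
  have hbij : Function.Bijective
      (fun p : Fin (3 * n + 1) × GSet n =>
        (⟨(p.2 : List Step).rotate p.1, by
          obtain ⟨r, ⟨u, hu1, hu2, hu3⟩⟩ := p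
          dsimp only
          constructor
          · rw [List.length_rotate, hu1]
          · rw [(List.rotate_perm u r).count_eq, hu2]⟩ : DSet n)) := by
    constructor
    · rintro ⟨r, ⟨u, hu⟩⟩ ⟨r', ⟨u', hu'⟩⟩ h
      simp only [Subtype.mk.injEq] at h
      obtain ⟨hu1, hu2, hu3⟩ := hu
      obtain ⟨hu'1, hu'2, hu'3⟩ := hu'
      have hσu : sg u = -1 := sg_of_mem_DSet hu1 hu2
      have hrot : u' = u.rotate ((r : ℕ) + ((3 * n + 1) - (r' : ℕ))) := by
        have e1 : (u'.rotate r').rotate ((3 * n + 1) - (r' : ℕ)) = u' := by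
          rw [List.rotate_rotate]
          rw [show (r' : ℕ) + (3 * n + 1 - (r' : ℕ)) = 3 * n + 1 by omega]
          rw [← hu'1, List.rotate_length]
        rw [← e1, ← h, List.rotate_rotate]
      -- uniqueness of the good rotation of u
      obtain ⟨r0, hr0, huniq⟩ := cycle_lemma u hσu (by rw [hu1]; omega)
      have h0 : (0 : ℕ) = r0 := huniq 0 ⟨by rw [hu1]; omega, by rw [List.rotate_zero]; exact hu3⟩
      set s : ℕ := ((r : ℕ) + ((3 * n + 1) - (r' : ℕ))) % (3 * n + 1) with hs
      have hslt : s < 3 * n + 1 := Nat.mod_lt _ (by omega)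
      have hrm := List.rotate_mod u ((r : ℕ) + ((3 * n + 1) - (r' : ℕ)))
      rw [hu1] at hrm
      have hrots : u' = u.rotate s := by
        rw [hrot]
        exact hrm.symm
      have hsgood : Good (u.rotate s) := by rw [← hrots]; exact hu'3
      have hs0 : s = r0 := huniq s ⟨by rw [hu1]; exact hslt, hsgood⟩
      have hseq : s = 0 := by rw [hs0, ← h0]
      have hdvd : (3 * n + 1) ∣ ((r : ℕ) + ((3 * n + 1) - (r' : ℕ))) :=
        Nat.dvd_of_mod_eq_zero (by rw [← hs]; exact hseq)
      have hrb : (r : ℕ) < 3 * n + 1 := r.2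
      have hr'b : (r' : ℕ) < 3 * n + 1 := r'.2
      have hkeq : (r : ℕ) + ((3 * n + 1) - (r' : ℕ)) = 3 * n + 1 := by
        rcases hdvd with ⟨k, hk⟩
        rcases k with _ | _ | m
        · omega
        · omega
        · exfalso
          have h2 : (3 * n + 1) * 2 ≤ (3 * n + 1) * (m + 1 + 1) :=
            Nat.mul_le_mul_left _ (by omega)
          rw [← hk] at h2
          omega
      have hrr' : (r : ℕ) = (r' : ℕ) := by omega
      have huu' : u = u' := by
        rw [hrots, hseq, List.rotate_zero]
      refine Prod.ext (Fin.ext hrr') (Subtype.ext ?_)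
      exact huu'
    · rintro ⟨w, hw1, hw2⟩
      have hσ : sg w = -1 := sg_of_mem_DSet hw1 hw2
      obtain ⟨r0, ⟨hr0, hg0⟩, -⟩ := cycle_lemma w hσ (by rw [hw1]; omega)
      rw [hw1] at hr0
      refine ⟨⟨⟨(3 * n + 1 - r0) % (3 * n + 1), Nat.mod_lt _ (by omega)⟩,
        ⟨w.rotate r0, by rw [List.length_rotate, hw1],
          by rw [(List.rotate_perm w r0).count_eq, hw2], hg0⟩⟩, ?_⟩
      apply Subtype.ext
      dsimp only
      have hlen : (w.rotate r0).length = 3 * n + 1 := by rw [List.length_rotate, hw1]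
      rw [← hlen, List.rotate_mod, hlen, List.rotate_rotate]
      rw [show r0 + (3 * n + 1 - r0) = 3 * n + 1 by omega]
      rw [← hw1, List.rotate_length]
  rw [← Nat.card_eq_of_bijective _ hbij, Nat.card_prod, Nat.card_eq_fintype_card,
    Fintype.card_fin]


lemma card_DSet (n : ℕ) :
    Nat.card (DSet n) = Nat.choose (3 * n + 1) n * 2 ^ (2 * n + 1) := by
  have : Nat.card (DSet n)
      = Nat.card {w : List Step // w.length = (3 * n + 1) ∧ w.count Step.c = n} := rfl
  rw [this, card_listset]
  congr 2
  omega

end Cyc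

theorem excursions_count (n : ℕ) :
    (Set.ncard {w : List Step | IsExcursion n w}) * (2 * n + 1)
      = 4 ^ n * Nat.choose (3 * n) n := by
  have hE : Set.ncard {w : List Step | IsExcursion n w} = Nat.card (Cyc.ESet n) :=
    (Nat.card_coe_set_eq _).symm
  rw [hE]
  have h1 := Cyc.card_DSet_eq n
  rw [Cyc.card_DSet n, Cyc.card_GSet n] at h1
  -- h1 : choose (3n+1) n * 2^(2n+1) = (3n+1) * (Nat.card ESet * 2)
  have hpos : 0 < 3 * n + 1 := by omega
  apply Nat.eq_of_mul_eq_mul_left hpos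
  have hid : (2 * n + 1) * Nat.choose (3 * n + 1) n = (3 * n + 1) * Nat.choose (3 * n) n := by
    have hsymm1 : Nat.choose (3 * n + 1) n = Nat.choose (3 * n + 1) (2 * n + 1) := by
      have := Nat.choose_symm (n := 3 * n + 1) (k := n) (by omega)
      rw [show 3 * n + 1 - n = 2 * n + 1 by omega] at this
      exact this.symm
    have hsymm2 : Nat.choose (3 * n) n = Nat.choose (3 * n) (2 * n) := by
      have := Nat.choose_symm (n := 3 * n) (k := n) (by omega)
      rw [show 3 * n - n = 2 * n by omega] at this
      exact this.symm
    have key := Nat.add_one_mul_choose_eq (3 * n) (2 * n)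
    rw [hsymm1, hsymm2]
    rw [key]
    ring
  have h4 : 2 ^ (2 * n + 1) = 2 * 4 ^ n := by
    rw [show (4 : ℕ) = 2 ^ 2 by norm_num, ← pow_mul]
    rw [pow_succ, pow_mul]
    ring
  set E := Nat.card (Cyc.ESet n) with hEdef
  set C1 := Nat.choose (3 * n + 1) n with hC1
  set C0 := Nat.choose (3 * n) n with hC0
  have h5 : C1 * 4 ^ n = (3 * n + 1) * E := by
    rw [h4] at h1
    apply Nat.eq_of_mul_eq_mul_left (show 0 < 2 by norm_num)
    calc 2 * (C1 * 4 ^ n) = C1 * (2 * 4 ^ n) := by ring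
      _ = (3 * n + 1) * (E * 2) := h1
      _ = 2 * ((3 * n + 1) * E) := by ring
  calc (3 * n + 1) * (E * (2 * n + 1))
      = (C1 * 4 ^ n) * (2 * n + 1) := by rw [h5]; ring
    _ = 4 ^ n * ((2 * n + 1) * C1) := by ring
    _ = 4 ^ n * ((3 * n + 1) * C0) := by rw [hid]
    _ = (3 * n + 1) * (4 ^ n * C0) := by ring
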